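/- Let p = α + β with α, β > 1, μ₁, μ₂ > 0, λ ∈ ℝ. The system of equations μ₁ s^{p−2} + λα s^{α−2} t^β = 1 and μ₂ t^{p−2} + λβ s^α t^{β−2} = 1 has a solution with s, t > 0 if and only if there exists r > 0 with μ₁ r^{p−2} + λα r^{α−2} − λβ r^α − μ₂ = 0 and μ₂ + λβ r^α > 0. -/
import Mathlib

private lemma key_eqs (p α β : ℝ) (hab : α + β = p) {r t : ℝ} (hr : 0 < r) (ht : 0 < t) :
    (r * t) ^ (p - 2) = r ^ (p - 2) * t ^ (p - 2) ∧
    (r * t) ^ (α - 2) * t ^ β = r ^ (α - 2) * t ^ (p - 2) ∧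
    (r * t) ^ α * t ^ (β - 2) = r ^ α * t ^ (p - 2) := by
  refine ⟨Real.mul_rpow hr.le ht.le, ?_, ?_⟩
  · rw [Real.mul_rpow hr.le ht.le, mul_assoc, ← Real.rpow_add ht]
    have : α - 2 + β = p - 2 := by linarith
    rw [this]
  · rw [Real.mul_rpow hr.le ht.le, mul_assoc, ← Real.rpow_add ht]
    have : α + (β - 2) = p - 2 := by linarith
    rw [this]

theorem stmt_17 (p α β μ₁ μ₂ lam : ℝ) (hα : 1 < α) (hβ : 1 < β)
    (hab : α + β = p) (hp : 2 < p) (hμ₁ : 0 < μ₁) (hμ₂ : 0 < μ₂) :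
    (∃ s t : ℝ, 0 < s ∧ 0 < t ∧
        μ₁ * s ^ (p - 2) + lam * α * s ^ (α - 2) * t ^ β = 1 ∧
        μ₂ * t ^ (p - 2) + lam * β * s ^ α * t ^ (β - 2) = 1)
      ↔ (∃ r : ℝ, 0 < r ∧
          μ₁ * r ^ (p - 2) + lam * α * r ^ (α - 2) - lam * β * r ^ α - μ₂ = 0 ∧
          0 < μ₂ + lam * β * r ^ α) := by
  constructor
  · rintro ⟨s, t, hs, ht, h1, h2⟩
    have hr : 0 < s / t := div_pos hs ht
    have hst : s = (s / t) * t := (div_mul_cancel₀ s ht.ne').symm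
    obtain ⟨e1, e2, e3⟩ := key_eqs p α β hab hr ht
    rw [hst] at h1 h2
    have htp : 0 < t ^ (p - 2) := Real.rpow_pos_of_pos ht _
    have h1' : (μ₁ * (s / t) ^ (p - 2) + lam * α * (s / t) ^ (α - 2)) * t ^ (p - 2) = 1 := by
      linear_combination h1 - μ₁ * e1 - lam * α * e2
    have h2' : (μ₂ + lam * β * (s / t) ^ α) * t ^ (p - 2) = 1 := by
      linear_combination h2 - lam * β * e3
    have hEq := mul_right_cancel₀ htp.ne' (h1'.trans h2'.symm)
    refine ⟨s / t, hr, by linarith, ?_⟩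
    nlinarith
  · rintro ⟨r, hr, heq, hpos⟩
    set t := (μ₂ + lam * β * r ^ α) ^ (-(p - 2)⁻¹) with htdef
    have ht : 0 < t := Real.rpow_pos_of_pos hpos _
    have htp : t ^ (p - 2) = (μ₂ + lam * β * r ^ α)⁻¹ := by
      rw [htdef, ← Real.rpow_mul hpos.le]
      have : -(p - 2)⁻¹ * (p - 2) = -1 := by
        have : p - 2 ≠ 0 := by linarith
        field_simp
      rw [this, Real.rpow_neg_one]
    have invC : (μ₂ + lam * β * r ^ α) * (μ₂ + lam * β * r ^ α)⁻¹ = 1 :=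
      mul_inv_cancel₀ hpos.ne'
    obtain ⟨e1, e2, e3⟩ := key_eqs p α β hab hr ht
    refine ⟨r * t, t, mul_pos hr ht, ht, ?_, ?_⟩
    · linear_combination μ₁ * e1 + lam * α * e2 + t ^ (p - 2) * heq +
        (μ₂ + lam * β * r ^ α) * htp + invC
    · linear_combination lam * β * e3 + (μ₂ + lam * β * r ^ α) * htp + invC
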